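/- arXiv:2403.12603 — 2 statements merged into one kernel-verified Lean document; each statement's English description precedes it below -/
import Mathlib

section
/- Let μ be a finite compactly supported Borel measure on ℝ^d with support contained in [δ, 1−δ]^d for some 0 < δ < 1/2, and suppose t > 0 is such that |μ̂(n)| ≤ C|n|^{−t} for all nonzero n ∈ ℤ^d. Then there is a constant C' such that |μ̂(ξ)| ≤ C'|ξ|^{−t} for all ξ ∈ ℝ^d with |ξ| ≥ 1. -/
/-!
Fix a smooth bump `φ` supported in `(0, 1)` with `φ = 1` on `[δ, 1 - δ]`, and let `F = 𝓕 φ`.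
Poisson summation for `x ↦ e(xu) φ(x)` gives `∑ₘ F(m + u) e(-my) = e(yu)` for `y ∈ [δ, 1 - δ]`
and every real `u`. Since `μ` lives on the cube, integrating this in the `k`-th coordinate, with
`ξ_k = n + u`, `n ∈ ℤ`, expresses `μ̂(ξ)` as `∑ₘ F(m + u) μ̂(ξ - (m + u) e_k)`, a combination of
values of `μ̂` at frequencies whose `k`-th coordinate is the integer `n - m`. As `F` decays faster
than any power and `1 + |ξ| ≤ (1 + |ξ - v|)(1 + |v|)`, a bound `|μ̂| ≤ A (1 + |·|)^(-t)` at those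
frequencies passes to `ξ` with a constant `c A`, `c` depending only on `F` and `t`. Starting from
the lattice and freeing one coordinate at a time yields the bound on all of `ℝ^d`.
-/

open MeasureTheory Filter Metric Set
open scoped ENNReal RealInnerProductSpace Topology

noncomputable section

/-- Fourier transform of a finite Borel measure on ℝ^d,
`μ̂(ξ) = ∫ e^{-2πi⟨x,ξ⟩} dμ(x)`. -/
def mft {d : ℕ} (μ : Measure (EuclideanSpace ℝ (Fin d))) (ξ : EuclideanSpace ℝ (Fin d)) : ℂ :=
  ∫ x, Complex.exp ((-(2 * Real.pi * ⟪x, ξ⟫) : ℝ) * Complex.I) ∂μ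

/-- Fourier transform of a function on ℝ^d. -/
def fft {d : ℕ} (f : EuclideanSpace ℝ (Fin d) → ℂ) (ξ : EuclideanSpace ℝ (Fin d)) : ℂ :=
  ∫ x, Complex.exp ((-(2 * Real.pi * ⟪x, ξ⟫) : ℝ) * Complex.I) * f x

/-- The integer lattice point associated to `n : Fin d → ℤ`. -/
def latt {d : ℕ} (n : Fin d → ℤ) : EuclideanSpace ℝ (Fin d) :=
  (EuclideanSpace.equiv (Fin d) ℝ).symm (fun i => (n i : ℝ))

/-- The cube `[δ, 1-δ]^d` in ℝ^d. -/
def cube {d : ℕ} (δ : ℝ) : Set (EuclideanSpace ℝ (Fin d)) :=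
  {x | ∀ i, x i ∈ Set.Icc δ (1 - δ)}

/-- The (s,θ)-energy `𝒥_{s,θ}(μ) = (∫ |μ̂(z)|^{2/θ} |z|^{s/θ-d} dz)^θ`. -/
def J {d : ℕ} (μ : Measure (EuclideanSpace ℝ (Fin d))) (s θ : ℝ) : ℝ≥0∞ :=
  (∫⁻ z, (‖mft μ z‖₊ : ℝ≥0∞) ^ (2 / θ) * (‖z‖₊ : ℝ≥0∞) ^ (s / θ - d)) ^ θ

/-- The lattice energy sum `∑_{z ∈ ℤ^d \ {0}} |μ̂(z)|^{2/θ} |z|^{s/θ-d}`. -/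
def latSum {d : ℕ} (μ : Measure (EuclideanSpace ℝ (Fin d))) (s θ : ℝ) : ℝ≥0∞ :=
  ∑' n : {n : Fin d → ℤ // n ≠ 0},
    (‖mft μ (latt (n : Fin d → ℤ))‖₊ : ℝ≥0∞) ^ (2 / θ) *
      (‖latt (n : Fin d → ℤ)‖₊ : ℝ≥0∞) ^ (s / θ - d)

/-- Fourier dimension `dim_F μ = sup{s ≥ 0 : |μ̂(ξ)| ≲ |ξ|^{-s/2}}`. -/
def dimF {d : ℕ} (μ : Measure (EuclideanSpace ℝ (Fin d))) : EReal :=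
  sSup {x : EReal | ∃ s : ℝ, x = (s : EReal) ∧ 0 ≤ s ∧
    ∃ C : ℝ, ∀ ξ, ξ ≠ 0 → ‖mft μ ξ‖ ≤ C * ‖ξ‖ ^ (-(s / 2))}

/-- Sobolev dimension `dim_S μ = sup{s ∈ ℝ : ∫ |μ̂(z)|² |z|^{s-d} dz < ∞}`. -/
def dimS {d : ℕ} (μ : Measure (EuclideanSpace ℝ (Fin d))) : EReal :=
  sSup {x : EReal | ∃ s : ℝ, x = (s : EReal) ∧
    (∫⁻ z, (‖mft μ z‖₊ : ℝ≥0∞) ^ (2 : ℝ) * (‖z‖₊ : ℝ≥0∞) ^ (s - d)) ≠ ∞}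

/-- Fourier spectrum `dim_F^θ μ = sup{s ≥ 0 : 𝒥_{s,θ}(μ) < ∞}`, with the
convention `dim_F^0 μ = dim_F μ`. -/
def dimFθ {d : ℕ} (μ : Measure (EuclideanSpace ℝ (Fin d))) (θ : ℝ) : EReal :=
  if θ = 0 then dimF μ
  else sSup {x : EReal | ∃ s : ℝ, x = (s : EReal) ∧ 0 ≤ s ∧ J μ s θ ≠ ∞}


open scoped FourierTransform ContDiff

lemma SchwartzMap.exists_norm_le_mul_one_add_norm_rpow_neg {E F : Type*}
    [NormedAddCommGroup E] [NormedSpace ℝ E] [NormedAddCommGroup F] [NormedSpace ℝ F]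
    (f : SchwartzMap E F) (b : ℝ) : ∃ K, ∀ x, ‖f x‖ ≤ K * (1 + ‖x‖) ^ (-b) := by
  set k := ⌈b⌉₊
  set K := 2 ^ k * ((Finset.Iic (k, 0)).sup fun m ↦ SchwartzMap.seminorm ℝ m.1 m.2) f
  refine ⟨K, fun x ↦ ?_⟩
  have hx : 0 < 1 + ‖x‖ := by positivity
  have hk : (1 + ‖x‖) ^ k * ‖f x‖ ≤ K := by
    simpa using SchwartzMap.one_add_le_sup_seminorm_apply (𝕜 := ℝ) (m := (k, 0)) le_rfl le_rfl f x
  have hK : 0 ≤ K := le_trans (by positivity) hk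
  calc ‖f x‖ = (1 + ‖x‖) ^ k * ‖f x‖ * (1 + ‖x‖) ^ (-(k : ℝ)) := by
        rw [Real.rpow_neg hx.le, Real.rpow_natCast]; field_simp
    _ ≤ K * (1 + ‖x‖) ^ (-(k : ℝ)) := by gcongr
    _ ≤ K * (1 + ‖x‖) ^ (-b) := by
        gcongr
        · linarith [norm_nonneg x]
        · exact Nat.le_ceil b

lemma one_add_norm_sub_rpow_neg_le {E : Type*} [SeminormedAddCommGroup E] {t : ℝ} (ht : 0 ≤ t)
    (x y : E) : (1 + ‖x - y‖) ^ (-t) ≤ (1 + ‖y‖) ^ t * (1 + ‖x‖) ^ (-t) := by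
  have hxy : 1 + ‖x‖ ≤ (1 + ‖x - y‖) * (1 + ‖y‖) := by
    nlinarith [norm_le_norm_sub_add x y, norm_nonneg (x - y), norm_nonneg y]
  have h1 : 0 < (1 + ‖x - y‖) ^ t := by positivity
  have h2 : 0 < (1 + ‖x‖) ^ t := by positivity
  rw [Real.rpow_neg (by positivity), Real.rpow_neg (by positivity), ← div_eq_mul_inv,
    le_div_iff₀ h2, inv_mul_le_iff₀ h1, ← Real.mul_rpow (by positivity) (by positivity)]
  gcongr

lemma rpow_neg_le_two_rpow_mul_one_add_rpow_neg {r t : ℝ} (hr : 1 ≤ r) (ht : 0 ≤ t) :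
    r ^ (-t) ≤ 2 ^ t * (1 + r) ^ (-t) := by
  rw [Real.rpow_neg (by positivity), Real.rpow_neg (by positivity), ← div_eq_mul_inv,
    le_div_iff₀ (by positivity), inv_mul_le_iff₀ (by positivity),
    ← Real.mul_rpow (by positivity) (by positivity)]
  gcongr
  linarith

lemma summable_one_add_abs_int_sq_inv : Summable fun m : ℤ ↦ ((1 + |(m : ℝ)|) ^ 2)⁻¹ := by
  have h : Summable fun n : ℕ ↦ ((1 + |(n : ℝ)|) ^ 2)⁻¹ := by
    have := (summable_nat_add_iff 1).2 (Real.summable_nat_pow_inv.2 one_lt_two)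
    simpa [add_comm] using this
  exact .of_nat_of_neg (by simpa using h) (by simpa using h)

lemma one_add_abs_add_sq_inv_le {a u : ℝ} (hu : |u| ≤ 1) :
    ((1 + |a + u|) ^ 2)⁻¹ ≤ 4 * ((1 + |a|) ^ 2)⁻¹ := by
  have h : |a| ≤ |a + u| + |u| := by simpa using abs_add_le (a + u) (-u)
  rw [← div_eq_mul_inv, le_div_iff₀ (by positivity), inv_mul_le_iff₀ (by positivity)]
  nlinarith [abs_nonneg a, abs_nonneg (a + u)]

lemma exists_contDiff_eqOn_one_support_subset_Ioo {a b : ℝ} (ha : 0 < a) (hb : b < 1) :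
    ∃ φ : ℝ → ℝ, ContDiff ℝ ∞ φ ∧ HasCompactSupport φ ∧ Function.support φ ⊆ Ioo 0 1 ∧
      EqOn φ 1 (Icc a b) := by
  set r := max (1 / 4) (max (1 / 2 - a) (b - 1 / 2))
  have hr : r < 1 / 2 := max_lt (by norm_num) (max_lt (by linarith) (by linarith))
  have har : 1 / 2 - a ≤ r := (le_max_left _ _).trans (le_max_right _ _)
  have hbr : b - 1 / 2 ≤ r := (le_max_right _ _).trans (le_max_right _ _)
  let φ : ContDiffBump (1 / 2 : ℝ) := ⟨r, (r + 1 / 2) / 2, by positivity, by linarith⟩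
  refine ⟨φ, φ.contDiff, φ.hasCompactSupport, ?_, fun y hy ↦ φ.one_of_mem_closedBall ?_⟩
  · intro x hx
    rw [φ.support_eq, mem_ball, Real.dist_eq, abs_lt] at hx
    change -((r + 1 / 2) / 2) < x - 1 / 2 ∧ x - 1 / 2 < (r + 1 / 2) / 2 at hx
    constructor <;> linarith [hx.1, hx.2]
  · rw [mem_closedBall, Real.dist_eq, abs_le]
    constructor <;> linarith [hy.1, hy.2]

namespace Kahane

def e (r : ℝ) : ℂ := Complex.exp (↑(-(2 * Real.pi * r)) * Complex.I)

lemma e_add (a b : ℝ) : e (a + b) = e a * e b := by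
  rw [e, e, e, ← Complex.exp_add]; congr 1; push_cast; ring

lemma e_neg_mul_e (r : ℝ) : e (-r) * e r = 1 := by
  rw [← e_add, neg_add_cancel, e]; simp

lemma norm_e (r : ℝ) : ‖e r‖ = 1 := Complex.norm_exp_ofReal_mul_I _

lemma contDiff_e : ContDiff ℝ ∞ e :=
  Complex.contDiff_exp.comp
    ((Complex.ofRealCLM.contDiff.comp (contDiff_const.mul contDiff_id).neg).mul contDiff_const)

lemma fourier_e_mul (f : ℝ → ℂ) (u η : ℝ) :
    𝓕 (fun x ↦ e (x * u) * f x) η = 𝓕 f (η + u) := by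
  rw [Real.fourier_real_eq_integral_exp_smul, Real.fourier_real_eq_integral_exp_smul]
  congr 1 with v
  simp only [smul_eq_mul, e, ← mul_assoc, ← Complex.exp_add]
  congr 2
  push_cast; ring

lemma tsum_fourier_add_mul_e {φ : ℝ → ℂ} (hφ : ContDiff ℝ ∞ φ) (hcs : HasCompactSupport φ)
    (hsupp : Function.support φ ⊆ Ioo 0 1) (u : ℝ) {y : ℝ} (hy : y ∈ Icc 0 1) :
    ∑' m : ℤ, 𝓕 φ (m + u) * e (-(m * y)) = e (y * u) * φ y := by
  set g : ℝ → ℂ := fun x ↦ e (x * u) * φ x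
  have hg : ContDiff ℝ ∞ g := (contDiff_e.comp (contDiff_id.mul contDiff_const)).mul hφ
  have hgcs : HasCompactSupport g := hcs.mul_left
  have hpoisson := SchwartzMap.tsum_eq_tsum_fourier (hgcs.toSchwartzMap hg) y
  have hperiodic : ∑' n : ℤ, g (y + n) = g y := by
    refine (tsum_eq_single 0 fun n hn ↦ ?_).trans (by simp)
    have hout : y + n ∉ Ioo 0 1 := by
      rintro ⟨h0, h1⟩
      have : (-1 : ℝ) < n := by linarith [hy.2]
      have : (n : ℝ) < 1 := by linarith [hy.1]
      exact hn (by norm_cast at *; omega)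
    simp [g, Function.notMem_support.1 fun h ↦ hout (hsupp h)]
  calc ∑' m : ℤ, 𝓕 φ (m + u) * e (-(m * y))
      = ∑' n : ℤ, 𝓕 (hgcs.toSchwartzMap hg) n * fourier n (y : UnitAddCircle) := by
        refine tsum_congr fun n ↦ ?_
        change _ = 𝓕 g n * _
        rw [fourier_e_mul, fourier_coe_apply, e]
        congr 2
        push_cast; ring
    _ = g y := hpoisson.symm.trans hperiodic

lemma exists_decaying_tsum_mul_e_eq {a b : ℝ} (ha : 0 < a) (hb : b < 1) (s : ℝ) :
    ∃ F : ℝ → ℂ, (∃ K, ∀ η, ‖F η‖ ≤ K * (1 + |η|) ^ (-s)) ∧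
      ∀ u, ∀ y ∈ Icc a b, ∑' m : ℤ, F (m + u) * e (-(m * y)) = e (y * u) := by
  obtain ⟨φ, hφ, hcs, hsupp, hone⟩ := exists_contDiff_eqOn_one_support_subset_Ioo ha hb
  set ψ : ℝ → ℂ := fun x ↦ (φ x : ℂ)
  have hψ : ContDiff ℝ ∞ ψ := Complex.ofRealCLM.contDiff.comp hφ
  have hψcs : HasCompactSupport ψ := hcs.comp_left Complex.ofReal_zero
  have hψsupp : Function.support ψ ⊆ Ioo 0 1 := fun x hx ↦ hsupp (by simpa [ψ] using hx)
  refine ⟨𝓕 ψ, ?_, fun u y hy ↦ ?_⟩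
  · obtain ⟨K, hK⟩ := (𝓕 (hψcs.toSchwartzMap hψ)).exists_norm_le_mul_one_add_norm_rpow_neg s
    exact ⟨K, fun η ↦ by rw [← Real.norm_eq_abs]; exact hK η⟩
  · have hy01 : y ∈ Icc 0 1 := ⟨by linarith [hy.1], by linarith [hy.2]⟩
    rw [tsum_fourier_add_mul_e hψ hψcs hψsupp u hy01]
    simp [ψ, hone hy]

variable {d : ℕ} (μ : Measure (EuclideanSpace ℝ (Fin d))) [IsFiniteMeasure μ]
  {δ : ℝ} {F : ℝ → ℂ} {K t : ℝ}

lemma integrable_e_inner (ξ : EuclideanSpace ℝ (Fin d)) : Integrable (fun x ↦ e ⟪x, ξ⟫) μ :=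
  (integrable_const (1 : ℝ)).mono'
    ((contDiff_e.continuous.comp (continuous_id.inner continuous_const)).aestronglyMeasurable)
    (ae_of_all _ fun _ ↦ (norm_e _).le)

lemma norm_mft_le (ξ : EuclideanSpace ℝ (Fin d)) : ‖mft μ ξ‖ ≤ μ.real univ :=
  (norm_integral_le_of_norm_le_const (C := 1) (ae_of_all μ fun x ↦ (norm_e ⟪x, ξ⟫).le)).trans_eq
    (one_mul _)

lemma inner_sub_single (x ξ : EuclideanSpace ℝ (Fin d)) (k : Fin d) (c : ℝ) :
    ⟪x, ξ - EuclideanSpace.single k c⟫ = ⟪x, ξ⟫ - c * x k := by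
  rw [inner_sub_right, EuclideanSpace.inner_single_right]
  simp

lemma mft_eq_tsum_mul_mft_sub_single (hμ : μ (cube δ)ᶜ = 0) {u : ℝ}
    (hF : Summable fun m : ℤ ↦ ‖F (m + u)‖)
    (hser : ∀ y ∈ Icc δ (1 - δ), ∑' m : ℤ, F (m + u) * e (-(m * y)) = e (y * u))
    (ξ : EuclideanSpace ℝ (Fin d)) (k : Fin d) :
    mft μ ξ = ∑' m : ℤ, F (m + u) * mft μ (ξ - EuclideanSpace.single k (m + u)) := by
  have hpt : ∀ x ∈ cube δ, e ⟪x, ξ⟫ =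
      ∑' m : ℤ, F (m + u) * e ⟪x, ξ - EuclideanSpace.single k (m + u)⟫ := by
    intro x hx
    have hterm (m : ℤ) : e ⟪x, ξ - EuclideanSpace.single k (m + u)⟫ =
        e (-(x k * u)) * e ⟪x, ξ⟫ * e (-(m * x k)) := by
      rw [inner_sub_single, ← e_add, ← e_add]
      congr 1; ring
    calc e ⟪x, ξ⟫ = e (-(x k * u)) * e ⟪x, ξ⟫ * e (x k * u) := by
          rw [mul_comm (e _), mul_assoc, e_neg_mul_e, mul_one]
      _ = e (-(x k * u)) * e ⟪x, ξ⟫ * ∑' m : ℤ, F (m + u) * e (-(m * x k)) := by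
          rw [hser _ (hx k)]
      _ = _ := by
          rw [← tsum_mul_left]
          exact tsum_congr fun m ↦ by rw [hterm]; ring
  have hint (m : ℤ) : Integrable
      (fun x ↦ F (m + u) * e ⟪x, ξ - EuclideanSpace.single k (m + u)⟫) μ :=
    (integrable_e_inner μ _).const_mul _
  have hsum : Summable fun m : ℤ ↦
      ∫ x, ‖F (m + u) * e ⟪x, ξ - EuclideanSpace.single k (m + u)⟫‖ ∂μ := by
    simpa [norm_mul, norm_e, mul_comm] using hF.mul_left (μ.real univ)
  calc mft μ ξ
      = ∫ x, ∑' m : ℤ, F (m + u) * e ⟪x, ξ - EuclideanSpace.single k (m + u)⟫ ∂μ :=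
        integral_congr_ae ((show ∀ᵐ x ∂μ, x ∈ cube δ from mem_ae_iff.2 hμ).mono hpt)
    _ = _ := (integral_tsum_of_summable_integral_norm hint hsum).symm
    _ = _ := tsum_congr fun m ↦ integral_const_mul _ _

lemma one_le_norm_latt {n : Fin d → ℤ} (hn : n ≠ 0) : 1 ≤ ‖latt n‖ := by
  obtain ⟨i, hi⟩ := Function.ne_iff.1 hn
  calc (1 : ℝ) ≤ |(n i : ℝ)| := by exact_mod_cast Int.one_le_abs hi
    _ ≤ ‖latt n‖ := PiLp.norm_apply_le (latt n) i

lemma norm_mft_latt_le {C : ℝ} (ht : 0 ≤ t)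
    (hdecay : ∀ n : Fin d → ℤ, n ≠ 0 → ‖mft μ (latt n)‖ ≤ C * ‖latt n‖ ^ (-t)) :
    ∃ A, 0 ≤ A ∧ ∀ n : Fin d → ℤ, ‖mft μ (latt n)‖ ≤ A * (1 + ‖latt n‖) ^ (-t) := by
  refine ⟨μ.real univ + 2 ^ t * |C|, by positivity, fun n ↦ ?_⟩
  by_cases hn : n = 0
  · have h0 : latt (0 : Fin d → ℤ) = 0 := by ext; simp [latt]
    subst hn
    rw [h0, norm_zero, add_zero, Real.one_rpow, mul_one]
    linarith [norm_mft_le μ 0, show 0 ≤ 2 ^ t * |C| by positivity]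
  · calc ‖mft μ (latt n)‖ ≤ |C| * ‖latt n‖ ^ (-t) :=
          (hdecay n hn).trans (by gcongr; exact le_abs_self C)
      _ ≤ |C| * (2 ^ t * (1 + ‖latt n‖) ^ (-t)) := by
          gcongr; exact rpow_neg_le_two_rpow_mul_one_add_rpow_neg (one_le_norm_latt hn) ht
      _ = 2 ^ t * |C| * (1 + ‖latt n‖) ^ (-t) := by ring
      _ ≤ (μ.real univ + 2 ^ t * |C|) * (1 + ‖latt n‖) ^ (-t) := by
          gcongr; exact le_add_of_nonneg_left measureReal_nonneg

lemma norm_mul_one_add_rpow_le (hF : ∀ η, ‖F η‖ ≤ K * (1 + |η|) ^ (-(t + 2))) {u : ℝ}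
    (hu : |u| ≤ 1) (m : ℤ) :
    ‖F (m + u)‖ * (1 + |m + u|) ^ t ≤ 4 * K * ((1 + |(m : ℝ)|) ^ 2)⁻¹ := by
  have hK : 0 ≤ K := by simpa using (norm_nonneg _).trans (hF 0)
  have hη : 0 < 1 + |(m : ℝ) + u| := by positivity
  calc ‖F (m + u)‖ * (1 + |m + u|) ^ t ≤ K * (1 + |m + u|) ^ (-(t + 2)) * (1 + |m + u|) ^ t := by
        gcongr; exact hF _
    _ = K * ((1 + |m + u|) ^ 2)⁻¹ := by
        rw [mul_assoc, ← Real.rpow_add hη, show -(t + 2) + t = -2 by ring, Real.rpow_neg hη.le,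
          Real.rpow_two]
    _ ≤ K * (4 * ((1 + |(m : ℝ)|) ^ 2)⁻¹) := by gcongr; exact one_add_abs_add_sq_inv_le hu
    _ = _ := by ring

lemma norm_mft_le_of_forall_sub_single (hμ : μ (cube δ)ᶜ = 0)
    (hF : ∀ η, ‖F η‖ ≤ K * (1 + |η|) ^ (-(t + 2)))
    (hser : ∀ u, ∀ y ∈ Icc δ (1 - δ), ∑' m : ℤ, F (m + u) * e (-(m * y)) = e (y * u))
    (ht : 0 ≤ t) {A : ℝ} (hA : 0 ≤ A) (ξ : EuclideanSpace ℝ (Fin d)) (k : Fin d)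
    (h : ∀ c : ℝ, (∃ z : ℤ, ξ k - c = z) →
      ‖mft μ (ξ - EuclideanSpace.single k c)‖ ≤
        A * (1 + ‖ξ - EuclideanSpace.single k c‖) ^ (-t)) :
    ‖mft μ ξ‖ ≤ 4 * K * (∑' m : ℤ, ((1 + |(m : ℝ)|) ^ 2)⁻¹) * A * (1 + ‖ξ‖) ^ (-t) := by
  set u := ξ k - round (ξ k)
  have hu : |u| ≤ 1 := (abs_sub_round _).trans (by norm_num)
  set w : ℤ → ℝ := fun m ↦ ((1 + |(m : ℝ)|) ^ 2)⁻¹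
  have hw : Summable w := summable_one_add_abs_int_sq_inv
  have hterm (m : ℤ) : ‖F (m + u) * mft μ (ξ - EuclideanSpace.single k (m + u))‖ ≤
      4 * K * w m * (A * (1 + ‖ξ‖) ^ (-t)) := by
    have hz : ∃ z : ℤ, ξ k - (m + u) = z := ⟨round (ξ k) - m, by push_cast [u]; ring⟩
    rw [norm_mul]
    calc ‖F (m + u)‖ * ‖mft μ (ξ - EuclideanSpace.single k (m + u))‖
        ≤ ‖F (m + u)‖ * (A * ((1 + ‖EuclideanSpace.single k ((m : ℝ) + u)‖) ^ t *
            (1 + ‖ξ‖) ^ (-t))) := by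
          gcongr
          exact (h _ hz).trans (by gcongr; exact one_add_norm_sub_rpow_neg_le ht _ _)
      _ = ‖F (m + u)‖ * (1 + |m + u|) ^ t * (A * (1 + ‖ξ‖) ^ (-t)) := by
          rw [PiLp.norm_single, Real.norm_eq_abs]; ring
      _ ≤ 4 * K * w m * (A * (1 + ‖ξ‖) ^ (-t)) :=
          mul_le_mul_of_nonneg_right (norm_mul_one_add_rpow_le hF hu m) (by positivity)
  have hFsum : Summable fun m : ℤ ↦ ‖F (m + u)‖ :=
    (hw.mul_left (4 * K)).of_nonneg_of_le (fun _ ↦ norm_nonneg _) fun m ↦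
      (le_mul_of_one_le_right (norm_nonneg _)
        (Real.one_le_rpow (le_add_of_nonneg_right (abs_nonneg _)) ht)).trans
          (norm_mul_one_add_rpow_le hF hu m)
  have hbound : Summable fun m : ℤ ↦ 4 * K * w m * (A * (1 + ‖ξ‖) ^ (-t)) :=
    (hw.mul_left _).mul_right _
  have hsum := hbound.of_nonneg_of_le (fun _ ↦ norm_nonneg _) hterm
  calc ‖mft μ ξ‖
      = ‖∑' m : ℤ, F (m + u) * mft μ (ξ - EuclideanSpace.single k (m + u))‖ := by
        rw [← mft_eq_tsum_mul_mft_sub_single μ hμ hFsum (hser u) ξ k]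
    _ ≤ ∑' m : ℤ, ‖F (m + u) * mft μ (ξ - EuclideanSpace.single k (m + u))‖ :=
        norm_tsum_le_tsum_norm hsum
    _ ≤ ∑' m : ℤ, 4 * K * w m * (A * (1 + ‖ξ‖) ^ (-t)) := hsum.tsum_le_tsum hterm hbound
    _ = _ := by rw [tsum_mul_right, tsum_mul_left]; ring

lemma exists_norm_mft_le_one_add_rpow_neg (hμ : μ (cube δ)ᶜ = 0)
    (hF : ∀ η, ‖F η‖ ≤ K * (1 + |η|) ^ (-(t + 2)))
    (hser : ∀ u, ∀ y ∈ Icc δ (1 - δ), ∑' m : ℤ, F (m + u) * e (-(m * y)) = e (y * u))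
    (ht : 0 ≤ t) (hlatt : ∃ A, 0 ≤ A ∧ ∀ n, ‖mft μ (latt n)‖ ≤ A * (1 + ‖latt n‖) ^ (-t)) :
    ∃ A, 0 ≤ A ∧ ∀ ξ, ‖mft μ ξ‖ ≤ A * (1 + ‖ξ‖) ^ (-t) := by
  classical
  have hK : 0 ≤ K := by simpa using (norm_nonneg _).trans (hF 0)
  suffices h : ∀ s : Finset (Fin d), ∃ A, 0 ≤ A ∧ ∀ ξ : EuclideanSpace ℝ (Fin d),
      (∀ i ∉ s, ∃ z : ℤ, ξ i = z) → ‖mft μ ξ‖ ≤ A * (1 + ‖ξ‖) ^ (-t) by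
    obtain ⟨A, hA, h⟩ := h Finset.univ
    exact ⟨A, hA, fun ξ ↦ h ξ fun i hi ↦ absurd (Finset.mem_univ i) hi⟩
  intro s
  induction s using Finset.induction_on with
  | empty =>
    obtain ⟨A, hA, hlatt⟩ := hlatt
    refine ⟨A, hA, fun ξ hξ ↦ ?_⟩
    choose n hn using fun i ↦ hξ i (Finset.notMem_empty i)
    obtain rfl : ξ = latt n := by ext i; exact hn i
    exact hlatt n
  | insert k s hk ih =>
    obtain ⟨A, hA, h⟩ := ih
    have hS : 0 ≤ ∑' m : ℤ, ((1 + |(m : ℝ)|) ^ 2)⁻¹ := tsum_nonneg fun _ ↦ by positivity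
    refine ⟨_, by positivity, fun ξ hξ ↦
      norm_mft_le_of_forall_sub_single μ hμ hF hser ht hA ξ k fun c hc ↦ h _ fun i hi ↦ ?_⟩
    by_cases hik : i = k
    · subst hik
      simpa using hc
    · obtain ⟨z, hz⟩ := hξ i (by simp [hik, hi])
      exact ⟨z, by simp [hik, hz]⟩

end Kahane

theorem stmt8_general (d : ℕ) (δ : ℝ) (hδ : 0 < δ)
    (μ : Measure (EuclideanSpace ℝ (Fin d))) [IsFiniteMeasure μ]
    (hμ : μ (cube δ)ᶜ = 0) (t C : ℝ) (ht : 0 < t)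
    (hdecay : ∀ n : Fin d → ℤ, n ≠ 0 → ‖mft μ (latt n)‖ ≤ C * ‖latt n‖ ^ (-t)) :
    ∃ C' : ℝ, ∀ ξ : EuclideanSpace ℝ (Fin d), 1 ≤ ‖ξ‖ →
      ‖mft μ ξ‖ ≤ C' * ‖ξ‖ ^ (-t) := by
  obtain ⟨F, ⟨K, hF⟩, hser⟩ :=
    Kahane.exists_decaying_tsum_mul_e_eq hδ (by linarith : 1 - δ < 1) (t + 2)
  obtain ⟨A, hA, hbound⟩ := Kahane.exists_norm_mft_le_one_add_rpow_neg μ hμ hF hser ht.le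
    (Kahane.norm_mft_latt_le μ ht.le hdecay)
  refine ⟨A, fun ξ hξ ↦ (hbound ξ).trans ?_⟩
  exact mul_le_mul_of_nonneg_left
    (Real.rpow_le_rpow_of_nonpos (by linarith) (by linarith) (by linarith)) hA

/-- Kahane's lemma: polynomial Fourier decay along ℤ^d implies the same
decay along all of ℝ^d, for measures supported in [δ,1-δ]^d. -/
theorem stmt8 (d : ℕ) (δ : ℝ) (hδ : 0 < δ) (hδ' : δ < 1 / 2)
    (μ : Measure (EuclideanSpace ℝ (Fin d))) [IsFiniteMeasure μ]
    (hμ : μ (cube δ)ᶜ = 0) (t C : ℝ) (ht : 0 < t)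
    (hdecay : ∀ n : Fin d → ℤ, n ≠ 0 → ‖mft μ (latt n)‖ ≤ C * ‖latt n‖ ^ (-t)) :
    ∃ C' : ℝ, ∀ ξ : EuclideanSpace ℝ (Fin d), 1 ≤ ‖ξ‖ →
      ‖mft μ ξ‖ ≤ C' * ‖ξ‖ ^ (-t) :=
  stmt8_general d δ hδ μ hμ t C ht hdecay
end
end

section
/- Let μ be a finite Borel measure on ℝ^d, θ ∈ (0,1], and p ∈ (1,∞). If μ̂ ∈ L^{2p/θ}(ℝ^d), then dim_F^θ μ ≥ dθ/p. -/
open MeasureTheory Filter Metric Set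
open scoped ENNReal RealInnerProductSpace Topology

noncomputable section

/-!
Split the energy integral at the unit sphere. Inside the unit ball `μ̂` is bounded by `μ(ℝ^d)`,
and `|z|^(s/θ - d)` is locally integrable because `s > 0`. Outside it, Hölder's inequality with
exponents `p` and `p'` bounds the integral by `‖μ̂‖_{2p/θ}^{2/θ}` times
`(∫_{|z| ≥ 1} |z|^((s/θ - d) p'))^(1/p')`, which is finite exactly when `s < dθ/p`.
-/

theorem enorm_norm_rpow_of_ne_zero {E : Type*} [NormedAddCommGroup E] {x : E} (hx : x ≠ 0)
    (r : ℝ) : ‖‖x‖ ^ r‖ₑ = ‖x‖ₑ ^ r := by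
  rw [← ofReal_norm, ← ofReal_norm, Real.norm_of_nonneg (by positivity),
    ENNReal.ofReal_rpow_of_pos (norm_pos_iff.2 hx)]

section NormRpow

variable {E : Type*} [NormedAddCommGroup E] [NormedSpace ℝ E] [FiniteDimensional ℝ E]
  [MeasurableSpace E] [BorelSpace E] (μ : Measure E) [μ.IsAddHaarMeasure]

theorem lintegral_ball_enorm_rpow_lt_top [Nontrivial E] {r : ℝ}
    (hr : -(Module.finrank ℝ E : ℝ) < r) (R : ℝ) :
    ∫⁻ x in ball (0 : E) R, ‖x‖ₑ ^ r ∂μ < ∞ := by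
  have hint : IntegrableOn (fun x : E => ‖x‖ ^ r) (ball 0 R) μ :=
    integrableOn_ball_of_norm_le_rpow (C := 1) (α := -r) Module.finrank_pos (by linarith)
      (ae_of_all _ fun x => by simp [abs_of_nonneg (Real.rpow_nonneg (norm_nonneg x) r)])
      (measurable_norm.pow_const r).aestronglyMeasurable
  refine lt_of_eq_of_lt (lintegral_congr_ae ?_) hint.2
  filter_upwards [ae_restrict_of_ae (μ.ae_ne 0)] with x hx
  exact (enorm_norm_rpow_of_ne_zero hx r).symm

theorem lintegral_compl_ball_enorm_rpow_lt_top {r : ℝ}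
    (hr : r < -(Module.finrank ℝ E : ℝ)) :
    ∫⁻ x in (ball (0 : E) 1)ᶜ, ‖x‖ₑ ^ r ∂μ < ∞ := by
  have hr₀ : r < 0 := hr.trans_le (by simp)
  -- off the unit ball `1 + ‖x‖ ≤ 2‖x‖`, so `‖x‖ ^ r` is dominated by the integrable `(1 + ‖x‖) ^ r`
  have hle : ∀ x ∈ (ball (0 : E) 1)ᶜ,
      ‖x‖ₑ ^ r ≤ ENNReal.ofReal (2 ^ (-r)) * ENNReal.ofReal ((1 + ‖x‖) ^ (-(-r))) := by
    intro x hx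
    have hx1 : 1 ≤ ‖x‖ := by simpa using hx
    have hx0 : x ≠ 0 := norm_pos_iff.1 (by linarith)
    rw [← enorm_norm_rpow_of_ne_zero hx0, neg_neg, ← ENNReal.ofReal_mul (by positivity),
      Real.enorm_of_nonneg (by positivity)]
    refine ENNReal.ofReal_le_ofReal ?_
    calc ‖x‖ ^ r = 2 ^ (-r) * (2 * ‖x‖) ^ r := by
          rw [Real.mul_rpow zero_le_two (norm_nonneg x), ← mul_assoc, ← Real.rpow_add two_pos,
            neg_add_cancel, Real.rpow_zero, one_mul]
      _ ≤ 2 ^ (-r) * (1 + ‖x‖) ^ r := by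
          refine mul_le_mul_of_nonneg_left ?_ (by positivity)
          exact Real.rpow_le_rpow_of_nonpos (by linarith) (by linarith) hr₀.le
  calc ∫⁻ x in (ball (0 : E) 1)ᶜ, ‖x‖ₑ ^ r ∂μ
      ≤ ∫⁻ x in (ball (0 : E) 1)ᶜ, ENNReal.ofReal (2 ^ (-r)) *
          ENNReal.ofReal ((1 + ‖x‖) ^ (-(-r))) ∂μ :=
        setLIntegral_mono' measurableSet_ball.compl hle
    _ ≤ ENNReal.ofReal (2 ^ (-r)) * ∫⁻ x, ENNReal.ofReal ((1 + ‖x‖) ^ (-(-r))) ∂μ := by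
        rw [← lintegral_const_mul' _ _ ENNReal.ofReal_ne_top]
        exact setLIntegral_le_lintegral _ _
    _ < ∞ := ENNReal.mul_lt_top ENNReal.ofReal_lt_top (finite_integral_one_add_norm (by linarith))

theorem lintegral_mul_enorm_rpow_lt_top {F : E → ℝ≥0∞} {C : ℝ≥0∞} {p r : ℝ} (hp : 1 < p)
    (hF : AEMeasurable F μ) (hFC : ∀ x, F x ≤ C) (hC : C ≠ ∞) (hFp : ∫⁻ x, F x ^ p ∂μ ≠ ∞)
    (hr₀ : -(Module.finrank ℝ E : ℝ) < r)
    (hr₁ : r < Module.finrank ℝ E / p - Module.finrank ℝ E) :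
    ∫⁻ x, F x * ‖x‖ₑ ^ r ∂μ < ∞ := by
  set d : ℝ := (Module.finrank ℝ E : ℝ)
  have : Nontrivial E := Module.nontrivial_of_finrank_pos (R := ℝ) <| by
    have : 0 < d / p := by linarith
    exact Nat.cast_pos.1 ((div_pos_iff_of_pos_right (by linarith)).1 this)
  set q := p.conjExponent
  have hpq : p.HolderConjugate q := .conjExponent hp
  have hrq : r * q < -d := by
    have : d / p - d = -d / q := by linear_combination d * hpq.inv_sub_one
    rw [this] at hr₁
    simpa [div_mul_cancel₀ _ hpq.symm.ne_zero] using mul_lt_mul_of_pos_right hr₁ hpq.symm.pos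
  rw [← lintegral_add_compl _ (measurableSet_ball (x := (0 : E)) (ε := 1))]
  refine ENNReal.add_lt_top.2 ⟨?_, ?_⟩
  · calc ∫⁻ x in ball 0 1, F x * ‖x‖ₑ ^ r ∂μ ≤ ∫⁻ x in ball 0 1, C * ‖x‖ₑ ^ r ∂μ :=
          lintegral_mono fun x => by gcongr; exact hFC x
      _ < ∞ := by
          rw [lintegral_const_mul' _ _ hC]
          exact ENNReal.mul_lt_top hC.lt_top (lintegral_ball_enorm_rpow_lt_top μ hr₀ 1)
  · refine (ENNReal.lintegral_mul_le_Lp_mul_Lq _ hpq hF.restrict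
      (measurable_enorm.pow_const r).aemeasurable).trans_lt (ENNReal.mul_lt_top ?_ ?_)
    · exact ENNReal.rpow_lt_top_of_nonneg (by positivity)
        (ne_top_of_le_ne_top hFp (setLIntegral_le_lintegral _ _))
    · simp_rw [← ENNReal.rpow_mul]
      exact ENNReal.rpow_lt_top_of_nonneg hpq.symm.one_div_nonneg
        (lintegral_compl_ball_enorm_rpow_lt_top μ hrq).ne

end NormRpow

theorem mft_eq_charFun {d : ℕ} (μ : Measure (EuclideanSpace ℝ (Fin d)))
    (ξ : EuclideanSpace ℝ (Fin d)) : mft μ ξ = charFun μ (-(2 * Real.pi) • ξ) := by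
  simp only [mft, charFun_apply, inner_smul_right]
  congr with x
  push_cast
  ring_nf

theorem measurable_mft {d : ℕ} (μ : Measure (EuclideanSpace ℝ (Fin d))) [IsFiniteMeasure μ] :
    Measurable (mft μ) := by
  simp_rw [funext (mft_eq_charFun μ)]
  fun_prop

theorem enorm_mft_le {d : ℕ} (μ : Measure (EuclideanSpace ℝ (Fin d))) [IsFiniteMeasure μ]
    (ξ : EuclideanSpace ℝ (Fin d)) : ‖mft μ ξ‖ₑ ≤ μ univ := by
  rw [mft_eq_charFun, ← ofReal_norm, ← ofReal_measureReal]
  exact ENNReal.ofReal_le_ofReal (norm_charFun_le _)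

theorem EReal.coe_le_sSup_of_forall_Ioo {S : Set EReal} {a c : ℝ} (hac : a < c)
    (h : ∀ s : ℝ, a < s → s < c → (s : EReal) ∈ S) : (c : EReal) ≤ sSup S := by
  refine le_of_forall_lt fun x hx => ?_
  obtain ⟨s, hs, hsc⟩ := EReal.exists_between_coe_real (max_lt hx (EReal.coe_lt_coe hac))
  exact (le_max_left _ _).trans_lt hs |>.trans_le <|
    le_sSup (h s (EReal.coe_lt_coe_iff.1 ((le_max_right _ _).trans_lt hs))
      (EReal.coe_lt_coe_iff.1 hsc))

theorem J_ne_top_of_lt {d : ℕ} {θ p s : ℝ} (hθ : 0 < θ) (hp : 1 < p)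
    (μ : Measure (EuclideanSpace ℝ (Fin d))) [IsFiniteMeasure μ]
    (hint : ∫⁻ z, ‖mft μ z‖ₑ ^ (2 * p / θ) ≠ ∞) (hs₀ : 0 < s) (hs : s < d * θ / p) :
    J μ s θ ≠ ∞ := by
  have hFp : ∫⁻ z, (‖mft μ z‖ₑ ^ (2 / θ)) ^ p ≠ ∞ := by
    simp_rw [← ENNReal.rpow_mul, div_mul_eq_mul_div]
    exact hint
  have hFC (z : EuclideanSpace ℝ (Fin d)) : ‖mft μ z‖ₑ ^ (2 / θ) ≤ μ univ ^ (2 / θ) :=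
    ENNReal.rpow_le_rpow (enorm_mft_le μ z) (by positivity)
  have hr₀ : -(d : ℝ) < s / θ - d := by linarith [div_pos hs₀ hθ]
  have hr₁ : s / θ - d < d / p - d := by
    rw [sub_lt_sub_iff_right, div_lt_div_iff₀ hθ (by linarith)]
    rwa [lt_div_iff₀ (by linarith)] at hs
  have hI := lintegral_mul_enorm_rpow_lt_top volume hp
    ((measurable_mft μ).enorm.pow_const _).aemeasurable hFC
    (ENNReal.rpow_ne_top_of_nonneg (by positivity) (measure_ne_top μ univ)) hFp
    (by rwa [finrank_euclideanSpace_fin]) (by rwa [finrank_euclideanSpace_fin])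
  exact (ENNReal.rpow_lt_top_of_nonneg hθ.le hI.ne).ne

theorem J_zero_ne_top_of_dim_zero {θ : ℝ} (hθ : 0 ≤ θ)
    (μ : Measure (EuclideanSpace ℝ (Fin 0))) [IsFiniteMeasure μ] : J μ 0 θ ≠ ∞ := by
  refine (ENNReal.rpow_lt_top_of_nonneg hθ (ne_of_lt ?_)).ne
  calc ∫⁻ z, ‖mft μ z‖ₑ ^ (2 / θ) * ‖z‖ₑ ^ ((0 : ℝ) / θ - ((0 : ℕ) : ℝ))
      ≤ ∫⁻ _, μ univ ^ (2 / θ) := lintegral_mono fun z => by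
        simpa using ENNReal.rpow_le_rpow (enorm_mft_le μ z) (by positivity)
    _ < ∞ := by
        rw [lintegral_const]
        exact ENNReal.mul_lt_top
          (ENNReal.rpow_lt_top_of_nonneg (by positivity) (measure_ne_top μ univ))
          (measure_lt_top _ _)

theorem stmt13_general (d : ℕ) (θ p : ℝ) (hθ : 0 < θ) (hp : 1 < p)
    (μ : Measure (EuclideanSpace ℝ (Fin d))) [IsFiniteMeasure μ]
    (hint : (∫⁻ z, (‖mft μ z‖₊ : ℝ≥0∞) ^ (2 * p / θ)) ≠ ∞) :
    (((d : ℝ) * θ / p : ℝ) : EReal) ≤ dimFθ μ θ := by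
  rw [dimFθ, if_neg hθ.ne']
  rcases Nat.eq_zero_or_pos d with rfl | hd
  · exact le_sSup ⟨0, by simp, le_rfl, J_zero_ne_top_of_dim_zero hθ.le μ⟩
  · exact EReal.coe_le_sSup_of_forall_Ioo (by positivity)
      fun s hs₀ hs => ⟨s, rfl, hs₀.le, J_ne_top_of_lt hθ hp μ hint hs₀ hs⟩

/-- if μ̂ ∈ L^{2p/θ}(ℝ^d) then `dim_F^θ μ ≥ dθ/p`. -/
theorem stmt13 (d : ℕ) (θ p : ℝ) (hθ : 0 < θ) (hθ1 : θ ≤ 1) (hp : 1 < p)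
    (μ : Measure (EuclideanSpace ℝ (Fin d))) [IsFiniteMeasure μ]
    (hint : (∫⁻ z, (‖mft μ z‖₊ : ℝ≥0∞) ^ (2 * p / θ)) ≠ ∞) :
    (((d : ℝ) * θ / p : ℝ) : EReal) ≤ dimFθ μ θ :=
  stmt13_general d θ p hθ hp μ hint
end
end
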